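/- arXiv:0904.2693 — 4 statements merged into one kernel-verified Lean document; each statement's English description precedes it below -/
import Mathlib

section
/- For every natural number n ≥ 1, every 0 ≤ k ≤ n, and every point x ∈ ℝ^n, the point x lies in the support |L^n_k| (i.e., in some cone σ_I with I ⊊ {0,1,…,n} and |I| ≤ k) if and only if the number of indices j ∈ {0,1,…,n} with x_j = f(x) is at least n − k + 1 (where x_0 := 0). -/
open Finset

/-- The generator `-e_i` of the fan, for `i ∈ {0,1,…,n}`:
for `i = 0` it is `-e_0 = e_1 + ⋯ + e_n`, and for `i ≥ 1` it is `-e_i`. -/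
def negE (n : ℕ) (i : Fin (n + 1)) : Fin n → ℝ :=
  fun j => if (i : ℕ) = 0 then 1 else if (j : ℕ) + 1 = (i : ℕ) then -1 else 0

/-- The cone `σ_I`: all nonnegative combinations of the vectors `-e_i`, `i ∈ I`. -/
def sigmaCone (n : ℕ) (I : Finset (Fin (n + 1))) : Set (Fin n → ℝ) :=
  { x | ∃ lam : Fin (n + 1) → ℝ, (∀ i, 0 ≤ lam i) ∧ x = ∑ i ∈ I, lam i • negE n i }

/-- The relative interior of `σ_I`: combinations with strictly positive coefficients. -/
def relintCone (n : ℕ) (I : Finset (Fin (n + 1))) : Set (Fin n → ℝ) :=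
  { x | ∃ lam : Fin (n + 1) → ℝ, (∀ i ∈ I, 0 < lam i) ∧ x = ∑ i ∈ I, lam i • negE n i }

/-- The support `|L^n_k|`: the union of the cones `σ_I` over proper subsets
`I ⊊ {0,1,…,n}` with `|I| ≤ k`. -/
def suppL (n k : ℕ) : Set (Fin n → ℝ) :=
  ⋃ I ∈ { I : Finset (Fin (n + 1)) | I ≠ Finset.univ ∧ I.card ≤ k }, sigmaCone n I

/-- The `j`-th extended coordinate of `x`, for `j ∈ {0,1,…,n}`, with `x_0 := 0`. -/
def coordX {n : ℕ} (x : Fin n → ℝ) (j : Fin (n + 1)) : ℝ :=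
  if h : (j : ℕ) = 0 then 0 else x ⟨(j : ℕ) - 1, by have := j.isLt; omega⟩

/-- The tropical polynomial `f(x) = max(0, x_1, …, x_n)`. -/
def tropF {n : ℕ} (x : Fin n → ℝ) : ℝ :=
  (Finset.univ : Finset (Fin (n + 1))).sup' Finset.univ_nonempty (coordX x)

lemma negE_apply (n : ℕ) (i : Fin (n + 1)) (t : Fin n) :
    negE n i t = if i = 0 then 1 else if i = t.succ then -1 else 0 := by
  have h0 : (i = 0) ↔ ((i : ℕ) = 0) := by rw [Fin.ext_iff]; rfl
  have h1 : (i = t.succ) ↔ ((t : ℕ) + 1 = (i : ℕ)) := by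
    rw [Fin.ext_iff, Fin.val_succ, eq_comm]
  simp only [negE, h0, h1]

lemma coordX_zero {n : ℕ} (x : Fin n → ℝ) : coordX x 0 = 0 := rfl

lemma coordX_succ {n : ℕ} (x : Fin n → ℝ) (t : Fin n) : coordX x t.succ = x t := by
  simp [coordX]

lemma sum_apply_eq (n : ℕ) (I : Finset (Fin (n + 1))) (lam : Fin (n + 1) → ℝ) (t : Fin n) :
    (∑ i ∈ I, lam i • negE n i) t
      = (if (0 : Fin (n + 1)) ∈ I then lam 0 else 0)
        - (if t.succ ∈ I then lam t.succ else 0) := by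
  have hts : (0 : Fin (n + 1)) ≠ t.succ := (Fin.succ_ne_zero t).symm
  have hpt : ∀ i ∈ I, lam i * negE n i t
      = (if i = 0 then lam i else 0) + (if i = t.succ then -lam i else 0) := by
    intro i _
    rw [negE_apply]
    rcases eq_or_ne i 0 with h | h
    · subst h; simp [hts]
    · rcases eq_or_ne i t.succ with h2 | h2
      · subst h2; simp [h]
      · simp [h, h2]
  rw [Finset.sum_apply]
  simp only [Pi.smul_apply, smul_eq_mul]
  rw [Finset.sum_congr rfl hpt, Finset.sum_add_distrib,
    Finset.sum_ite_eq' I (0 : Fin (n + 1)) lam,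
    Finset.sum_ite_eq' I t.succ (fun i => -lam i)]
  split_ifs <;> ring

/-- For `n ≥ 1`, `k ≤ n`, and `x ∈ ℝ^n`: `x` lies in `|L^n_k|` iff
the number of indices `j ∈ {0,1,…,n}` with `x_j = f(x)` is at least `n - k + 1`. -/
theorem suppL_mem_iff_ncard_argmax (n k : ℕ) (hn : 1 ≤ n) (hk : k ≤ n)
    (x : Fin n → ℝ) :
    x ∈ suppL n k ↔
      n - k + 1 ≤ { j : Fin (n + 1) | coordX x j = tropF x }.ncard := by
  classical
  set A : Finset (Fin (n + 1)) := Finset.univ.filter (fun j => coordX x j = tropF x) with hA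
  have hsetA : { j : Fin (n + 1) | coordX x j = tropF x } = (A : Set (Fin (n + 1))) := by
    ext j; simp [hA]
  rw [hsetA, Set.ncard_coe_finset]
  have hle : ∀ j : Fin (n + 1), coordX x j ≤ tropF x := fun j =>
    Finset.le_sup' (coordX x) (Finset.mem_univ j)
  have hex : ∃ j : Fin (n + 1), coordX x j = tropF x := by
    obtain ⟨j, _, hj⟩ := Finset.exists_mem_eq_sup' Finset.univ_nonempty (coordX x)
    exact ⟨j, hj.symm⟩
  constructor
  · intro h
    simp only [suppL, Set.mem_iUnion, Set.mem_setOf_eq] at h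
    obtain ⟨I, ⟨hIne, hIcard⟩, lam, hlam, hx⟩ := h
    set μ : ℝ := if (0 : Fin (n + 1)) ∈ I then lam 0 else 0 with hμ
    have hcoord : ∀ j : Fin (n + 1), coordX x j = μ - (if j ∈ I then lam j else 0) := by
      intro j
      induction j using Fin.cases with
      | zero => rw [coordX_zero, hμ]; split_ifs <;> ring
      | succ t => rw [coordX_succ, hx, sum_apply_eq]
    have hex0 : ∃ j0, j0 ∉ I := by
      by_contra hcon
      push_neg at hcon
      exact hIne (Finset.eq_univ_iff_forall.2 hcon)
    obtain ⟨j0, hj0⟩ := hex0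
    have hμ0 : coordX x j0 = μ := by rw [hcoord j0, if_neg hj0]; ring
    have htrop : tropF x = μ := by
      refine le_antisymm (Finset.sup'_le _ _ fun j _ => ?_) (hμ0 ▸ hle j0)
      rw [hcoord j]
      have : (0 : ℝ) ≤ if j ∈ I then lam j else 0 := by
        split_ifs
        exacts [hlam j, le_rfl]
      linarith
    have hsub : Iᶜ ⊆ A := by
      intro j hj
      rw [Finset.mem_compl] at hj
      rw [hA, Finset.mem_filter]
      refine ⟨Finset.mem_univ j, ?_⟩
      rw [hcoord j, if_neg hj, htrop]; ring
    have hcard := Finset.card_le_card hsub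
    rw [Finset.card_compl, Fintype.card_fin] at hcard
    omega
  · intro h
    obtain ⟨j1, hj1⟩ := hex
    have hj1A : j1 ∈ A := by rw [hA, Finset.mem_filter]; exact ⟨Finset.mem_univ j1, hj1⟩
    refine Set.mem_iUnion₂.2 ⟨Aᶜ, ⟨?_, ?_⟩, ?_⟩
    · intro hcon
      have : j1 ∈ Aᶜ := hcon ▸ Finset.mem_univ j1
      exact (Finset.mem_compl.1 this) hj1A
    · rw [Finset.card_compl, Fintype.card_fin]
      have := Finset.card_le_univ A
      rw [Fintype.card_fin] at this
      omega
    · refine ⟨fun j => tropF x - coordX x j, fun j => by dsimp only; linarith [hle j], ?_⟩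
      funext t
      rw [sum_apply_eq]
      have hmemA : ∀ j : Fin (n + 1), j ∉ Aᶜ → coordX x j = tropF x := by
        intro j hj
        rw [Finset.mem_compl, not_not, hA, Finset.mem_filter] at hj
        exact hj.2
      have hT1 : (if (0 : Fin (n + 1)) ∈ Aᶜ then tropF x - coordX x 0 else 0) = tropF x := by
        split_ifs with h0
        · rw [coordX_zero]; ring
        · have := hmemA 0 h0
          rw [coordX_zero] at this
          rw [← this]
        
      rw [hT1]
      split_ifs with h2
      · rw [coordX_succ]; ring
      · have := hmemA t.succ h2
        rw [coordX_succ] at this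
        rw [this]; ring
end

section
/- For every natural number n ≥ 1 and all proper subsets I, J ⊊ {0,1,…,n}, the intersection of cones satisfies σ_I ∩ σ_J = σ_{I∩J}. -/
namespace SigmaCone

variable {n : ℕ}

lemma negE_apply (i : Fin (n + 1)) (j : Fin n) :
    negE n i j = (if i = 0 then 1 else 0) - (if i = j.succ then 1 else 0) := by
  cases i using Fin.cases with
  | zero => simp [negE, (Fin.succ_ne_zero j).symm]
  | succ i =>
    simp only [negE, Fin.succ_ne_zero, Fin.succ_inj, if_false]
    grind

lemma sum_smul_negE_apply (I : Finset (Fin (n + 1))) (lam : Fin (n + 1) → ℝ) (j : Fin n) :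
    (∑ i ∈ I, lam i • negE n i) j =
      (if 0 ∈ I then lam 0 else 0) - (if j.succ ∈ I then lam j.succ else 0) := by
  simp only [Finset.sum_apply, Pi.smul_apply, smul_eq_mul, negE_apply, mul_sub, mul_ite,
    mul_one, mul_zero, Finset.sum_sub_distrib, Finset.sum_ite_eq']

def IsLevel (I : Finset (Fin (n + 1))) (x : Fin n → ℝ) (c : ℝ) : Prop :=
  0 ≤ c ∧ (0 ∉ I → c = 0) ∧ ∀ j, x j ≤ c ∧ (j.succ ∉ I → x j = c)

lemma mem_sigmaCone_iff {I : Finset (Fin (n + 1))} {x : Fin n → ℝ} :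
    x ∈ sigmaCone n I ↔ ∃ c, IsLevel I x c := by
  constructor
  · rintro ⟨lam, hlam, rfl⟩
    refine ⟨if 0 ∈ I then lam 0 else 0, by split_ifs <;> simp [hlam], by simp +contextual,
      fun j => ?_⟩
    rw [sum_smul_negE_apply]
    have hμ := hlam j.succ
    constructor
    · split_ifs <;> linarith
    · intro hj; simp [hj]
  · rintro ⟨c, hc, hc0, hx⟩
    refine ⟨Fin.cons c fun j => c - x j, fun i => ?_, funext fun j => ?_⟩
    · cases i using Fin.cases with
      | zero => exact hc
      | succ j => simpa using (hx j).1
    · rw [sum_smul_negE_apply]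
      by_cases h0 : 0 ∈ I <;> by_cases hj : j.succ ∈ I <;>
        simp [h0, hj, (hx j).2, hc0]

lemma IsLevel.mono {I I' : Finset (Fin (n + 1))} {x : Fin n → ℝ} {c : ℝ} (h : IsLevel I x c)
    (hII' : I ⊆ I') : IsLevel I' x c :=
  ⟨h.1, fun h0 => h.2.1 fun h0' => h0 (hII' h0'),
    fun j => ⟨(h.2.2 j).1, fun hj => (h.2.2 j).2 fun hj' => hj (hII' hj')⟩⟩

lemma IsLevel.inter {I J : Finset (Fin (n + 1))} {x : Fin n → ℝ} {c d : ℝ} (hc : IsLevel I x c)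
    (hd : IsLevel J x d) : IsLevel (I ∩ J) x (min c d) := by
  obtain ⟨hc, hc0, hcx⟩ := hc
  obtain ⟨hd, hd0, hdx⟩ := hd
  refine ⟨le_min hc hd, fun h0 => ?_, fun j => ⟨le_min (hcx j).1 (hdx j).1, fun hj => ?_⟩⟩
  · rcases not_and_or.mp (Finset.mem_inter.not.mp h0) with h0 | h0
    · simp [hc0 h0, hd]
    · simp [hd0 h0, hc]
  · rcases not_and_or.mp (Finset.mem_inter.not.mp hj) with hj | hj
    · have hxc := (hcx j).2 hj
      rw [hxc, min_eq_left (hxc ▸ (hdx j).1)]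
    · have hxd := (hdx j).2 hj
      rw [hxd, min_eq_right (hxd ▸ (hcx j).1)]

end SigmaCone

open SigmaCone in
theorem sigmaCone_inter_general (n : ℕ) (I J : Finset (Fin (n + 1))) :
    sigmaCone n I ∩ sigmaCone n J = sigmaCone n (I ∩ J) := by
  ext x
  simp only [Set.mem_inter_iff, mem_sigmaCone_iff]
  constructor
  · rintro ⟨⟨c, hc⟩, ⟨d, hd⟩⟩
    exact ⟨min c d, hc.inter hd⟩
  · rintro ⟨c, hc⟩
    exact ⟨⟨c, hc.mono Finset.inter_subset_left⟩, ⟨c, hc.mono Finset.inter_subset_right⟩⟩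

/-- For `n ≥ 1` and proper subsets `I, J ⊊ {0,1,…,n}`,
`σ_I ∩ σ_J = σ_{I ∩ J}`. -/
theorem sigmaCone_inter (n : ℕ) (hn : 1 ≤ n) (I J : Finset (Fin (n + 1)))
    (hI : I ≠ Finset.univ) (hJ : J ≠ Finset.univ) :
    sigmaCone n I ∩ sigmaCone n J = sigmaCone n (I ∩ J) :=
  sigmaCone_inter_general n I J
end

section
/- For every natural number n ≥ 1 and all subsets I ⊆ J ⊊ {0,1,…,n}, the cone σ_I is a face of σ_J: there exists a linear functional u : ℝ^n → ℝ such that u(x) ≥ 0 for all x ∈ σ_J and σ_I = { x ∈ σ_J : u(x) = 0 }. -/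
/-
Choose `j₀ ∉ J`. Any `n` of the `n + 1` vectors `-e_i` are linearly independent (the only
relation is `∑ -e_i = 0`), so there is a linear functional `u` with `u(-e_i) = 0` for `i ∈ I`
and `u(-e_i) = 1` for `i ∈ J \ I`. Such a `u` is nonnegative on `σ_J`, and a nonnegative
combination of the `-e_i`, `i ∈ J`, lies in its kernel exactly when the coefficients on
`J \ I` vanish, i.e. when it lies in `σ_I`.
-/

open Finset

def nonnegCombinations {ι E : Type*} [AddCommMonoid E] [Module ℝ E] (v : ι → E)
    (I : Finset ι) : Set E :=
  { x | ∃ lam : ι → ℝ, (∀ i, 0 ≤ lam i) ∧ x = ∑ i ∈ I, lam i • v i }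

namespace nonnegCombinations

variable {ι E : Type*} [AddCommGroup E] [Module ℝ E] {v : ι → E}

theorem mono {I J : Finset ι} (hIJ : I ⊆ J) :
    nonnegCombinations v I ⊆ nonnegCombinations v J := by
  classical
  rintro x ⟨lam, hlam, rfl⟩
  refine ⟨(I : Set ι).indicator lam, fun i => Set.indicator_nonneg (fun i _ => hlam i) i, ?_⟩
  rw [← sum_indicator_subset (fun i => lam i • v i) hIJ]
  refine sum_congr rfl fun i _ => ?_
  simp only [Set.indicator_apply, ite_smul, zero_smul]

theorem map_nonneg (u : E →ₗ[ℝ] ℝ) {J : Finset ι} (hu : ∀ i ∈ J, 0 ≤ u (v i)) {x : E}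
    (hx : x ∈ nonnegCombinations v J) : 0 ≤ u x := by
  obtain ⟨lam, hlam, rfl⟩ := hx
  simp only [map_sum, map_smul, smul_eq_mul]
  exact sum_nonneg fun i hi => mul_nonneg (hlam i) (hu i hi)

theorem eq_sep_map_eq_zero [DecidableEq ι] (u : E →ₗ[ℝ] ℝ) {I J : Finset ι} (hIJ : I ⊆ J)
    (hI : ∀ i ∈ I, u (v i) = 0) (hJI : ∀ i ∈ J \ I, 0 < u (v i)) :
    nonnegCombinations v I = { x ∈ nonnegCombinations v J | u x = 0 } := by
  ext x
  constructor
  · intro hx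
    refine ⟨mono hIJ hx, ?_⟩
    obtain ⟨lam, -, rfl⟩ := hx
    simp only [map_sum, map_smul, smul_eq_mul]
    exact sum_eq_zero fun i hi => by rw [hI i hi, mul_zero]
  · rintro ⟨⟨lam, hlam, rfl⟩, hux⟩
    have hsplit : u (∑ i ∈ J, lam i • v i) = ∑ i ∈ J \ I, lam i * u (v i) := by
      rw [← sum_sdiff hIJ, map_add, map_sum, map_sum]
      simp only [map_smul, smul_eq_mul]
      rw [sum_eq_zero (s := I) fun i hi => by rw [hI i hi, mul_zero], add_zero]
    rw [hsplit, sum_eq_zero_iff_of_nonneg fun i hi => mul_nonneg (hlam i) (hJI i hi).le]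
      at hux
    have hlam_zero : ∀ i ∈ J \ I, lam i = 0 := fun i hi =>
      (mul_eq_zero.mp (hux i hi)).resolve_right (hJI i hi).ne'
    refine ⟨lam, hlam, (sum_subset hIJ fun i hiJ hiI => ?_).symm⟩
    rw [hlam_zero i (mem_sdiff.mpr ⟨hiJ, hiI⟩), zero_smul]

end nonnegCombinations

theorem sigmaCone_eq_nonnegCombinations (n : ℕ) (I : Finset (Fin (n + 1))) :
    sigmaCone n I = nonnegCombinations (negE n) I :=
  rfl

theorem negE_zero (n : ℕ) : negE n 0 = 1 := by
  ext j
  simp [negE]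

theorem negE_succ (n : ℕ) (k : Fin n) : negE n k.succ = -Pi.single k 1 := by
  ext j
  simp only [negE, Fin.val_succ, Nat.add_eq_zero_iff, one_ne_zero, and_false, if_false,
    add_left_inj, Pi.neg_apply, Pi.single_apply, ← Fin.ext_iff]
  split_ifs <;> simp

theorem exists_linearMap_negE_eq (n : ℕ) (c : Fin (n + 1) → ℝ) (hc : ∑ i, c i = 0) :
    ∃ u : (Fin n → ℝ) →ₗ[ℝ] ℝ, ∀ i, u (negE n i) = c i := by
  refine ⟨-∑ k, c k.succ • LinearMap.proj k, fun i => ?_⟩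
  cases i using Fin.cases with
  | zero =>
    rw [Fin.sum_univ_succ] at hc
    simp only [negE_zero, LinearMap.neg_apply, LinearMap.coe_sum, LinearMap.coe_smul,
      LinearMap.coe_proj, Finset.sum_apply, Pi.smul_apply, Function.eval, Pi.one_apply,
      smul_eq_mul, mul_one]
    linarith
  | succ k =>
    simp [negE_succ, Pi.single_apply]

theorem Finset.exists_eqOn_sum_eq_zero {ι : Type*} [Fintype ι] [DecidableEq ι]
    {J : Finset ι} (hJ : J ≠ univ) (f : ι → ℝ) :
    ∃ c : ι → ℝ, ∑ i, c i = 0 ∧ ∀ i ∈ J, c i = f i := by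
  obtain ⟨j₀, hj₀⟩ := not_forall.mp (mt eq_univ_iff_forall.mpr hJ)
  refine ⟨(J : Set ι).indicator f - Pi.single j₀ (∑ i ∈ J, f i), ?_, fun i hi => ?_⟩
  · simp [sum_sub_distrib, sum_indicator_subset f (subset_univ J)]
  · have hij₀ : i ≠ j₀ := ne_of_mem_of_not_mem hi hj₀
    simp [Set.indicator_of_mem (mem_coe.mpr hi), hij₀]

theorem exists_linearMap_negE_eqOn (n : ℕ) {J : Finset (Fin (n + 1))} (hJ : J ≠ univ)
    (f : Fin (n + 1) → ℝ) : ∃ u : (Fin n → ℝ) →ₗ[ℝ] ℝ, ∀ i ∈ J, u (negE n i) = f i := by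
  obtain ⟨c, hc, hcf⟩ := Finset.exists_eqOn_sum_eq_zero hJ f
  obtain ⟨u, hu⟩ := exists_linearMap_negE_eq n c hc
  exact ⟨u, fun i hi => (hu i).trans (hcf i hi)⟩

theorem sigmaCone_face_general (n : ℕ) (I J : Finset (Fin (n + 1)))
    (hIJ : I ⊆ J) (hJ : J ≠ Finset.univ) :
    ∃ u : (Fin n → ℝ) →ₗ[ℝ] ℝ,
      (∀ x ∈ sigmaCone n J, 0 ≤ u x) ∧
      sigmaCone n I = { x ∈ sigmaCone n J | u x = 0 } := by
  classical
  simp only [sigmaCone_eq_nonnegCombinations]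
  obtain ⟨u, hu⟩ := exists_linearMap_negE_eqOn n hJ fun i => if i ∈ I then 0 else 1
  have hI : ∀ i ∈ I, u (negE n i) = 0 := fun i hi => by simp [hu i (hIJ hi), hi]
  have hJI : ∀ i ∈ J \ I, 0 < u (negE n i) := fun i hi => by
    obtain ⟨hiJ, hiI⟩ := mem_sdiff.mp hi
    simp [hu i hiJ, hiI]
  have hJ_nonneg : ∀ i ∈ J, 0 ≤ u (negE n i) := fun i hi => by
    rw [hu i hi]
    split_ifs <;> norm_num
  exact ⟨u, fun x => nonnegCombinations.map_nonneg u hJ_nonneg,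
    nonnegCombinations.eq_sep_map_eq_zero u hIJ hI hJI⟩

/-- For `n ≥ 1` and `I ⊆ J ⊊ {0,1,…,n}`, the cone `σ_I` is a face
of `σ_J`: there is a linear functional `u` that is nonnegative on `σ_J` and cuts
out `σ_I` as `{x ∈ σ_J : u x = 0}`. -/
theorem sigmaCone_face (n : ℕ) (hn : 1 ≤ n) (I J : Finset (Fin (n + 1)))
    (hIJ : I ⊆ J) (hJ : J ≠ Finset.univ) :
    ∃ u : (Fin n → ℝ) →ₗ[ℝ] ℝ,
      (∀ x ∈ sigmaCone n J, 0 ≤ u x) ∧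
      sigmaCone n I = { x ∈ sigmaCone n J | u x = 0 } :=
  sigmaCone_face_general n I J hIJ hJ
end

section
/- For every natural number n ≥ 1 and all proper subsets I, J ⊊ {0,1,…,n}, one has σ_I ⊆ σ_J if and only if I ⊆ J. -/
/-! If `i ∉ J`, a coordinate functional (the first coordinate for `i = 0`, minus the `i`-th one
otherwise) is positive on `-e_i` and nonpositive on every other `-e_j`, hence on all of `σ_J`;
so `-e_i ∈ σ_I \ σ_J` whenever `i ∈ I \ J`. -/

open Finset

lemma negE_mem_sigmaCone {n : ℕ} {I : Finset (Fin (n + 1))} {i : Fin (n + 1)} (hi : i ∈ I) :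
    negE n i ∈ sigmaCone n I :=
  ⟨Pi.single i 1, (Pi.single_nonneg.2 zero_le_one : (0 : Fin (n + 1) → ℝ) ≤ _),
    by simp [Pi.single_apply, hi]⟩

lemma sigmaCone_mono {n : ℕ} {I J : Finset (Fin (n + 1))} (h : I ⊆ J) :
    sigmaCone n I ⊆ sigmaCone n J := by
  rintro x ⟨lam, hlam, rfl⟩
  refine ⟨(↑I : Set (Fin (n + 1))).indicator lam, Set.indicator_nonneg fun i _ => hlam i, ?_⟩
  rw [← Finset.sum_subset h fun j _ hjI => by simp [hjI]]
  exact Finset.sum_congr rfl fun j hj => by simp [hj]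

lemma LinearMap.map_sum_smul_nonpos {ι V : Type*} [AddCommMonoid V] [Module ℝ V]
    (φ : V →ₗ[ℝ] ℝ) {s : Finset ι} {c : ι → ℝ} {v : ι → V} (hc : ∀ i ∈ s, 0 ≤ c i)
    (hv : ∀ i ∈ s, φ (v i) ≤ 0) : φ (∑ i ∈ s, c i • v i) ≤ 0 := by
  rw [map_sum]
  exact Finset.sum_nonpos fun i hi => by
    rw [map_smul, smul_eq_mul]
    exact mul_nonpos_of_nonneg_of_nonpos (hc i hi) (hv i hi)

lemma exists_linearMap_pos_negE_nonpos_negE_ne {n : ℕ} (hn : 1 ≤ n) (i : Fin (n + 1)) :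
    ∃ φ : (Fin n → ℝ) →ₗ[ℝ] ℝ, 0 < φ (negE n i) ∧ ∀ j ≠ i, φ (negE n j) ≤ 0 := by
  cases i using Fin.cases with
  | zero =>
    refine ⟨LinearMap.proj ⟨0, hn⟩, by simp [negE], fun j hj => ?_⟩
    have hj0 : (j : ℕ) ≠ 0 := fun h => hj (Fin.ext h)
    simp only [LinearMap.coe_proj, Function.eval, negE, hj0, if_false]
    split_ifs <;> norm_num
  | succ t =>
    refine ⟨-LinearMap.proj t, by simp [negE], fun j hj => ?_⟩
    have htj : (t : ℕ) + 1 ≠ j := fun h => hj (Fin.ext (by simp [← h]))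
    simp only [LinearMap.neg_apply, LinearMap.coe_proj, Function.eval, negE, htj, if_false]
    split_ifs <;> norm_num

lemma negE_notMem_sigmaCone {n : ℕ} (hn : 1 ≤ n) {J : Finset (Fin (n + 1))} {i : Fin (n + 1)}
    (hi : i ∉ J) : negE n i ∉ sigmaCone n J := by
  rintro ⟨lam, hlam, hsum⟩
  obtain ⟨φ, hφi, hφJ⟩ := exists_linearMap_pos_negE_nonpos_negE_ne hn i
  have hφsum := φ.map_sum_smul_nonpos (fun j _ => hlam j)
    fun j hj => hφJ j fun hji => hi (hji ▸ hj)
  rw [← hsum] at hφsum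
  exact hφi.not_ge hφsum

theorem sigmaCone_subset_iff_general (n : ℕ) (hn : 1 ≤ n) (I J : Finset (Fin (n + 1))) :
    sigmaCone n I ⊆ sigmaCone n J ↔ I ⊆ J :=
  ⟨fun h _ hi => by_contra fun hiJ => negE_notMem_sigmaCone hn hiJ (h (negE_mem_sigmaCone hi)),
    sigmaCone_mono⟩

/-- For `n ≥ 1` and proper subsets `I, J ⊊ {0,1,…,n}`,
`σ_I ⊆ σ_J` iff `I ⊆ J`. -/
theorem sigmaCone_subset_iff (n : ℕ) (hn : 1 ≤ n) (I J : Finset (Fin (n + 1)))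
    (hI : I ≠ Finset.univ) (hJ : J ≠ Finset.univ) :
    sigmaCone n I ⊆ sigmaCone n J ↔ I ⊆ J :=
  sigmaCone_subset_iff_general n hn I J
end
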